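/- Consider a repeated zero-sum matrix game with cε-bounded distortion: players observe distorted payoffs ṽ_{ij}(t) which almost surely eventually satisfy |ṽ_{ij}(t) − v_{ij}| ≤ cε for all i, j, where (v_{ij}) = M is a fixed matrix with value v. If both players are ε-Hannan consistent with respect to the distorted payoffs, then almost surely v − (c+1)ε ≤ liminf_{t→∞} g̃(t) ≤ limsup_{t→∞} g̃(t) ≤ v + (c+1)ε, where g̃(t) is the average distorted payoff received by player 1. -/

import Mathlib

open MeasureTheory Filter
open scoped BigOperators

/-- Expected payoff to player 1 in the matrix game `M` under mixed strategies `σ₁, σ₂`. -/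
noncomputable def payoff {m n : ℕ} (M : Fin m → Fin n → ℝ)
    (σ₁ : Fin m → ℝ) (σ₂ : Fin n → ℝ) : ℝ :=
  ∑ i, ∑ j, σ₁ i * M i j * σ₂ j

/-- The (minimax) value of the zero-sum matrix game `M`. -/
noncomputable def gameValue {m n : ℕ} (M : Fin m → Fin n → ℝ) : ℝ :=
  ⨅ σ₂ : stdSimplex ℝ (Fin n), ⨆ σ₁ : stdSimplex ℝ (Fin m), payoff M σ₁.1 σ₂.1

/-!
Against the empirical distribution of player 2's past moves some pure row earns at least the
value `v` of `M` per round (only `v = inf sup` is used, never the minimax theorem), and from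
`t₀` on the distorted payoffs of that row are within `cε` of the true ones. So the best fixed row
in hindsight has distorted average payoff at least `v - cε - o(1)`, and player 1's ε-Hannan
consistency puts his own average within `ε + o(1)` of it. Symmetrically, the empirical
distribution of player 1's moves and player 2's consistency give the upper bound.
-/

open Finset Topology

section StdSimplex

variable {ι : Type*} [Fintype ι] {w x : ι → ℝ} {b : ℝ}

lemma sum_mul_le_of_mem_stdSimplex (hw : w ∈ stdSimplex ℝ ι) (hx : ∀ i, x i ≤ b) :
    ∑ i, w i * x i ≤ b :=
  calc ∑ i, w i * x i ≤ ∑ i, w i * b :=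
        sum_le_sum fun i _ => mul_le_mul_of_nonneg_left (hx i) (hw.1 i)
    _ = b := by rw [← sum_mul, hw.2, one_mul]

lemma le_sum_mul_of_mem_stdSimplex (hw : w ∈ stdSimplex ℝ ι) (hx : ∀ i, b ≤ x i) :
    b ≤ ∑ i, w i * x i :=
  calc b = ∑ i, w i * b := by rw [← sum_mul, hw.2, one_mul]
    _ ≤ ∑ i, w i * x i := sum_le_sum fun i _ => mul_le_mul_of_nonneg_left (hx i) (hw.1 i)

end StdSimplex

section EmpiricalDistribution

variable {α : Type*} [Fintype α] [DecidableEq α]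

noncomputable def empiricalDistribution (x : ℕ → α) (t : ℕ) (a : α) : ℝ :=
  #{s ∈ range t | x s = a} / t

lemma sum_empiricalDistribution_mul (x : ℕ → α) (t : ℕ) (f : α → ℝ) :
    ∑ a, empiricalDistribution x t a * f a = (∑ s ∈ range t, f (x s)) / t := by
  simp only [empiricalDistribution, div_mul_eq_mul_div, ← sum_div, ← sum_fiberwise' (range t) x f,
    sum_const, nsmul_eq_mul]

lemma empiricalDistribution_mem_stdSimplex (x : ℕ → α) {t : ℕ} (ht : 0 < t) :
    empiricalDistribution x t ∈ stdSimplex ℝ α := by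
  refine ⟨fun a => by unfold empiricalDistribution; positivity, ?_⟩
  have := sum_empiricalDistribution_mul x t 1
  simp only [Pi.one_apply, mul_one, sum_const, card_range, nsmul_eq_mul] at this
  rw [this, div_self (by positivity)]

end EmpiricalDistribution

section MatrixGame

variable {m n : ℕ} (M : Fin m → Fin n → ℝ) {p : Fin m → ℝ} {q : Fin n → ℝ}

lemma payoff_eq_sum_mul_row (p : Fin m → ℝ) (q : Fin n → ℝ) :
    payoff M p q = ∑ i, p i * ∑ j, M i j * q j := by
  simp only [payoff, mul_sum, mul_assoc]

lemma payoff_eq_sum_col_mul (p : Fin m → ℝ) (q : Fin n → ℝ) :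
    payoff M p q = ∑ j, q j * ∑ i, p i * M i j := by
  rw [payoff, sum_comm]
  exact sum_congr rfl fun j _ => by rw [mul_sum]; exact sum_congr rfl fun i _ => by ring

lemma bddAbove_range_payoff (q : Fin n → ℝ) :
    BddAbove (Set.range fun p : stdSimplex ℝ (Fin m) => payoff M p q) := by
  obtain ⟨b, hb⟩ := (Set.finite_range fun i => ∑ j, M i j * q j).bddAbove
  refine ⟨b, Set.forall_mem_range.2 fun p => ?_⟩
  rw [payoff_eq_sum_mul_row]
  exact sum_mul_le_of_mem_stdSimplex p.2 fun i => hb ⟨i, rfl⟩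

lemma bddBelow_range_iSup_payoff [NeZero m] :
    BddBelow (Set.range fun q : stdSimplex ℝ (Fin n) =>
      ⨆ p : stdSimplex ℝ (Fin m), payoff M p q) := by
  let p₀ : stdSimplex ℝ (Fin m) := ⟨_, single_mem_stdSimplex ℝ 0⟩
  obtain ⟨b, hb⟩ := (Set.finite_range fun j => ∑ i, p₀.1 i * M i j).bddBelow
  refine ⟨b, Set.forall_mem_range.2 fun q => ?_⟩
  refine le_trans ?_ (le_ciSup (bddAbove_range_payoff M q) p₀)
  rw [payoff_eq_sum_col_mul]
  exact le_sum_mul_of_mem_stdSimplex q.2 fun j => hb ⟨j, rfl⟩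

lemma exists_gameValue_le_row [NeZero m] (hq : q ∈ stdSimplex ℝ (Fin n)) :
    ∃ i, gameValue M ≤ ∑ j, M i j * q j := by
  obtain ⟨i, hi⟩ := Finite.exists_max fun i => ∑ j, M i j * q j
  refine ⟨i, (ciInf_le (bddBelow_range_iSup_payoff M) ⟨q, hq⟩).trans (ciSup_le fun p => ?_)⟩
  rw [payoff_eq_sum_mul_row]
  exact sum_mul_le_of_mem_stdSimplex p.2 hi

lemma exists_col_le_gameValue [NeZero m] [NeZero n] (hp : p ∈ stdSimplex ℝ (Fin m)) :
    ∃ j, ∑ i, p i * M i j ≤ gameValue M := by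
  obtain ⟨j, hj⟩ := Finite.exists_min fun j => ∑ i, p i * M i j
  refine ⟨j, le_ciInf fun q => le_trans ?_ (le_ciSup (bddAbove_range_payoff M q) ⟨p, hp⟩)⟩
  rw [payoff_eq_sum_col_mul]
  exact le_sum_mul_of_mem_stdSimplex q.2 hj

lemma exists_gameValue_mul_le_sum_row [NeZero m] (J : ℕ → Fin n) (t : ℕ) :
    ∃ i, gameValue M * t ≤ ∑ s ∈ range t, M i (J s) := by
  rcases t.eq_zero_or_pos with rfl | ht
  · exact ⟨0, by simp⟩
  obtain ⟨i, hi⟩ := exists_gameValue_le_row M (empiricalDistribution_mem_stdSimplex J ht)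
  refine ⟨i, (le_div_iff₀ (by positivity)).1 ?_⟩
  simpa only [mul_comm (M i _), sum_empiricalDistribution_mul] using hi

lemma exists_sum_col_le_gameValue_mul [NeZero m] [NeZero n] (I : ℕ → Fin m) (t : ℕ) :
    ∃ j, ∑ s ∈ range t, M (I s) j ≤ gameValue M * t := by
  rcases t.eq_zero_or_pos with rfl | ht
  · exact ⟨0, by simp⟩
  obtain ⟨j, hj⟩ := exists_col_le_gameValue M (empiricalDistribution_mem_stdSimplex I ht)
  refine ⟨j, (div_le_iff₀ (by positivity)).1 ?_⟩
  simpa only [sum_empiricalDistribution_mul] using hj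

end MatrixGame

lemma sum_range_le_sum_range_add_of_abs_sub_le {a b : ℕ → ℝ} {δ : ℝ} {t₀ t : ℕ}
    (ha : ∀ s, a s ≤ 1) (hb : ∀ s, 0 ≤ b s) (hab : ∀ s ≥ t₀, |a s - b s| ≤ δ) (ht : t₀ ≤ t) :
    ∑ s ∈ range t, a s ≤ ∑ s ∈ range t, b s + (t₀ + δ * (t - t₀)) := by
  rw [← sub_le_iff_le_add', ← sum_sub_distrib, range_eq_Ico,
    ← sum_Ico_consecutive _ t₀.zero_le ht]
  have hhead : ∑ s ∈ Ico 0 t₀, (a s - b s) ≤ t₀ :=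
    (sum_le_card_nsmul _ _ 1 fun s _ => by linarith [ha s, hb s]).trans_eq (by simp)
  have htail : ∑ s ∈ Ico t₀ t, (a s - b s) ≤ δ * (t - t₀) :=
    (sum_le_card_nsmul _ _ δ fun s hs => (le_abs_self _).trans (hab s (mem_Ico.1 hs).1)).trans_eq
      (by simp [Nat.cast_sub ht, mul_comm])
  exact add_le_add hhead htail

lemma tendsto_add_div_natCast (x y : ℝ) :
    Tendsto (fun t : ℕ => x + y / t) atTop (𝓝 x) := by
  simpa using tendsto_const_nhds.add (tendsto_const_div_atTop_nhds_zero_nat y)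

section LimsupBounds

variable {ι : Type*} {l : Filter ι} [l.NeBot] {g a r : ι → ℝ} {L ε : ℝ}

lemma limsup_le_add_of_eventually_le_add (hg : IsBoundedUnder (· ≥ ·) l g)
    (hr : IsBoundedUnder (· ≤ ·) l r) (hrε : limsup r l ≤ ε) (ha : Tendsto a l (𝓝 L))
    (hle : ∀ᶠ t in l, g t ≤ a t + r t) : limsup g l ≤ L + ε := by
  refine le_of_forall_pos_le_add fun η hη => limsup_le_of_le hg.isCoboundedUnder_le ?_
  filter_upwards [hle, eventually_lt_of_limsup_lt (by linarith : limsup r l < ε + η / 2) hr,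
    ha.eventually (gt_mem_nhds (by linarith : L < L + η / 2))] with t ht hrt hat
  linarith

lemma le_liminf_sub_of_eventually_sub_le (hg : IsBoundedUnder (· ≤ ·) l g)
    (hr : IsBoundedUnder (· ≤ ·) l r) (hrε : limsup r l ≤ ε) (ha : Tendsto a l (𝓝 L))
    (hle : ∀ᶠ t in l, a t - r t ≤ g t) : L - ε ≤ liminf g l := by
  refine le_of_forall_pos_le_add fun η hη => ?_
  rw [← sub_le_iff_le_add]
  refine le_liminf_of_le hg.isCoboundedUnder_ge ?_
  filter_upwards [hle, eventually_lt_of_limsup_lt (by linarith : limsup r l < ε + η / 2) hr,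
    ha.eventually (lt_mem_nhds (by linarith : L - η / 2 < L))] with t ht hrt hat
  linarith

end LimsupBounds

section DistortedPlay

variable {m n : ℕ} {M : Fin m → Fin n → ℝ} {V : ℕ → Fin m → Fin n → ℝ} {δ ε : ℝ} {t₀ : ℕ}

theorem gameValue_sub_le_liminf_average [NeZero m] (hM : ∀ i j, M i j ∈ Set.Icc (0:ℝ) 1)
    (hV : ∀ t i j, V t i j ∈ Set.Icc (0:ℝ) 1) (I : ℕ → Fin m) (J : ℕ → Fin n)
    (hclose : ∀ t ≥ t₀, ∀ i j, |V t i j - M i j| ≤ δ)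
    (hregret : limsup (fun t : ℕ => ((⨆ i, ∑ s ∈ range t, V s i (J s)) -
      ∑ s ∈ range t, V s (I s) (J s)) / (t : ℝ)) atTop ≤ ε) :
    gameValue M - (δ + ε) ≤
      liminf (fun t : ℕ => (∑ s ∈ range t, V s (I s) (J s)) / (t : ℝ)) atTop := by
  set G : ℕ → ℝ := fun t => ∑ s ∈ range t, V s (I s) (J s)
  set X : ℕ → ℝ := fun t => ⨆ i, ∑ s ∈ range t, V s i (J s)
  have hG : ∀ t, 0 ≤ G t := fun t => sum_nonneg fun s _ => (hV s _ _).1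
  have hX : ∀ t : ℕ, X t ≤ t := fun t => ciSup_le fun i =>
    (sum_le_card_nsmul _ _ 1 fun s _ => (hV s i (J s)).2).trans_eq (by simp)
  have hXG : ∀ t : ℕ, t₀ ≤ t → gameValue M * t ≤ X t + (t₀ + δ * (t - t₀)) := by
    intro t ht
    obtain ⟨i, hi⟩ := exists_gameValue_mul_le_sum_row M J t
    have hrow := sum_range_le_sum_range_add_of_abs_sub_le (fun s => (hM i (J s)).2)
      (fun s => (hV s i (J s)).1) (fun s hs => abs_sub_comm (V s i (J s)) _ ▸ hclose s hs i (J s))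
      ht
    have hsup : ∑ s ∈ range t, V s i (J s) ≤ X t :=
      le_ciSup (Set.finite_range fun i => ∑ s ∈ range t, V s i (J s)).bddAbove i
    linarith
  rw [← sub_sub]
  refine le_liminf_sub_of_eventually_sub_le (a := fun t : ℕ => gameValue M - δ + (δ - 1) * t₀ / t)
    (r := fun t : ℕ => (X t - G t) / t) ?_ ?_ hregret ?_ ?_
  · exact isBoundedUnder_of ⟨1, fun t => div_le_one_of_le₀ ((sum_le_card_nsmul _ _ 1
      fun s _ => (hV s _ _).2).trans_eq (by simp)) t.cast_nonneg⟩
  · exact isBoundedUnder_of ⟨1, fun t => div_le_one_of_le₀ (by linarith [hX t, hG t])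
      t.cast_nonneg⟩
  · exact tendsto_add_div_natCast _ _
  · filter_upwards [eventually_ge_atTop t₀, eventually_gt_atTop 0] with t ht ht0
    have htpos : (0 : ℝ) < t := by exact_mod_cast ht0
    have hat : (gameValue M - δ + (δ - 1) * t₀ / t) * t =
        gameValue M * t - (t₀ + δ * (t - t₀)) := by
      field_simp
      ring
    have : gameValue M - δ + (δ - 1) * t₀ / t ≤ X t / t :=
      (le_div_iff₀ htpos).2 (by linarith [hXG t ht])
    rw [sub_div]
    linarith

theorem limsup_average_le_gameValue_add [NeZero m] [NeZero n]
    (hM : ∀ i j, M i j ∈ Set.Icc (0:ℝ) 1)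
    (hV : ∀ t i j, V t i j ∈ Set.Icc (0:ℝ) 1) (I : ℕ → Fin m) (J : ℕ → Fin n)
    (hclose : ∀ t ≥ t₀, ∀ i j, |V t i j - M i j| ≤ δ)
    (hregret : limsup (fun t : ℕ => ((⨆ j, ∑ s ∈ range t, (1 - V s (I s) j)) -
      ∑ s ∈ range t, (1 - V s (I s) (J s))) / (t : ℝ)) atTop ≤ ε) :
    limsup (fun t : ℕ => (∑ s ∈ range t, V s (I s) (J s)) / (t : ℝ)) atTop ≤
      gameValue M + (δ + ε) := by
  set G : ℕ → ℝ := fun t => ∑ s ∈ range t, V s (I s) (J s)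
  set Y : ℕ → ℝ := fun t => ⨆ j, ∑ s ∈ range t, (1 - V s (I s) j)
  have hsum_one_sub : ∀ (t : ℕ) (f : ℕ → ℝ), ∑ s ∈ range t, (1 - f s) = t - ∑ s ∈ range t, f s :=
    fun t f => by simp [sum_sub_distrib]
  have hY : ∀ t : ℕ, Y t ≤ t := fun t => ciSup_le fun j => by
    rw [hsum_one_sub]
    linarith [sum_nonneg fun s (_ : s ∈ range t) => (hV s (I s) j).1]
  have hGY : ∀ t : ℕ, t₀ ≤ t → G t ≤ gameValue M * t + (t₀ + δ * (t - t₀)) + (Y t - (t - G t)) := by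
    intro t ht
    obtain ⟨j, hj⟩ := exists_sum_col_le_gameValue_mul M I t
    have hcol := sum_range_le_sum_range_add_of_abs_sub_le (fun s => (hV s (I s) j).2)
      (fun s => (hM (I s) j).1) (fun s hs => hclose s hs (I s) j) ht
    have hsup : ∑ s ∈ range t, (1 - V s (I s) j) ≤ Y t :=
      le_ciSup (Set.finite_range fun j => ∑ s ∈ range t, (1 - V s (I s) j)).bddAbove j
    rw [hsum_one_sub] at hsup
    linarith
  rw [← add_assoc]
  refine limsup_le_add_of_eventually_le_add (a := fun t : ℕ => gameValue M + δ + (1 - δ) * t₀ / t)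
    (r := fun t : ℕ => (Y t - ∑ s ∈ range t, (1 - V s (I s) (J s))) / t) ?_ ?_ hregret ?_ ?_
  · exact isBoundedUnder_of ⟨0, fun t => div_nonneg (sum_nonneg fun s _ => (hV s _ _).1)
      t.cast_nonneg⟩
  · refine isBoundedUnder_of ⟨1, fun t => div_le_one_of_le₀ ?_ t.cast_nonneg⟩
    have := sum_nonneg fun s (_ : s ∈ range t) => sub_nonneg.2 (hV s (I s) (J s)).2
    linarith [hY t]
  · exact tendsto_add_div_natCast _ _
  · filter_upwards [eventually_ge_atTop t₀, eventually_gt_atTop 0] with t ht ht0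
    have htpos : (0 : ℝ) < t := by exact_mod_cast ht0
    rw [hsum_one_sub, div_le_iff₀ htpos, add_mul, div_mul_cancel₀ _ htpos.ne']
    have hat : (gameValue M + δ + (1 - δ) * t₀ / t) * t =
        gameValue M * t + (t₀ + δ * (t - t₀)) := by
      field_simp
      ring
    linarith [hGY t ht]

end DistortedPlay

theorem stmt6_general {m n : ℕ} [NeZero m] [NeZero n]
    {Ω : Type*} [MeasurableSpace Ω] (P : Measure Ω)
    (M : Fin m → Fin n → ℝ) (hM : ∀ i j, M i j ∈ Set.Icc (0:ℝ) 1)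
    (vtil : Ω → ℕ → Fin m → Fin n → ℝ)
    (hvtil : ∀ ω t i j, vtil ω t i j ∈ Set.Icc (0:ℝ) 1)
    (I : Ω → ℕ → Fin m) (J : Ω → ℕ → Fin n) (c ε : ℝ)
    (hdist : ∀ᵐ ω ∂P, ∃ t₀ : ℕ, ∀ t ≥ t₀, ∀ i j, |vtil ω t i j - M i j| ≤ c * ε)
    (hHC1 : ∀ᵐ ω ∂P, limsup (fun t : ℕ =>
        ((⨆ i, ∑ s ∈ Finset.range t, vtil ω s i (J ω s)) -
          ∑ s ∈ Finset.range t, vtil ω s (I ω s) (J ω s)) / (t : ℝ)) atTop ≤ ε)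
    (hHC2 : ∀ᵐ ω ∂P, limsup (fun t : ℕ =>
        ((⨆ j, ∑ s ∈ Finset.range t, (1 - vtil ω s (I ω s) j)) -
          ∑ s ∈ Finset.range t, (1 - vtil ω s (I ω s) (J ω s))) / (t : ℝ)) atTop ≤ ε) :
    ∀ᵐ ω ∂P,
      gameValue M - (c + 1) * ε ≤ liminf (fun t : ℕ =>
          (∑ s ∈ Finset.range t, vtil ω s (I ω s) (J ω s)) / (t : ℝ)) atTop ∧
      limsup (fun t : ℕ =>
          (∑ s ∈ Finset.range t, vtil ω s (I ω s) (J ω s)) / (t : ℝ)) atTop ≤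
        gameValue M + (c + 1) * ε := by
  rw [add_one_mul]
  filter_upwards [hdist, hHC1, hHC2] with ω ⟨t₀, hclose⟩ hregret₁ hregret₂
  exact ⟨gameValue_sub_le_liminf_average hM (hvtil ω) (I ω) (J ω) hclose hregret₁,
    limsup_average_le_gameValue_add hM (hvtil ω) (I ω) (J ω) hclose hregret₂⟩

/-- Repeated zero-sum matrix game with `cε`-bounded distortion: players observe distorted
payoffs `vtil` which a.s. eventually satisfy `|vtil t i j - M i j| ≤ cε`. If both players
are ε-Hannan consistent with respect to the distorted payoffs, then almost surely
`v - (c+1)ε ≤ liminf g̃(t) ≤ limsup g̃(t) ≤ v + (c+1)ε`, where `g̃(t)` is the average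
distorted payoff received by player 1 and `v` is the value of `M`. -/
theorem stmt6 {m n : ℕ} [NeZero m] [NeZero n]
    {Ω : Type*} [MeasurableSpace Ω] (P : Measure Ω) [IsProbabilityMeasure P]
    (M : Fin m → Fin n → ℝ) (hM : ∀ i j, M i j ∈ Set.Icc (0:ℝ) 1)
    (vtil : Ω → ℕ → Fin m → Fin n → ℝ)
    (hvtil : ∀ ω t i j, vtil ω t i j ∈ Set.Icc (0:ℝ) 1)
    (I : Ω → ℕ → Fin m) (J : Ω → ℕ → Fin n) (c ε : ℝ) (hc : 0 < c) (hε : 0 < ε)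
    (hdist : ∀ᵐ ω ∂P, ∃ t₀ : ℕ, ∀ t ≥ t₀, ∀ i j, |vtil ω t i j - M i j| ≤ c * ε)
    (hHC1 : ∀ᵐ ω ∂P, limsup (fun t : ℕ =>
        ((⨆ i, ∑ s ∈ Finset.range t, vtil ω s i (J ω s)) -
          ∑ s ∈ Finset.range t, vtil ω s (I ω s) (J ω s)) / (t : ℝ)) atTop ≤ ε)
    (hHC2 : ∀ᵐ ω ∂P, limsup (fun t : ℕ =>
        ((⨆ j, ∑ s ∈ Finset.range t, (1 - vtil ω s (I ω s) j)) -
          ∑ s ∈ Finset.range t, (1 - vtil ω s (I ω s) (J ω s))) / (t : ℝ)) atTop ≤ ε) :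
    ∀ᵐ ω ∂P,
      gameValue M - (c + 1) * ε ≤ liminf (fun t : ℕ =>
          (∑ s ∈ Finset.range t, vtil ω s (I ω s) (J ω s)) / (t : ℝ)) atTop ∧
      limsup (fun t : ℕ =>
          (∑ s ∈ Finset.range t, vtil ω s (I ω s) (J ω s)) / (t : ℝ)) atTop ≤
        gameValue M + (c + 1) * ε :=
  stmt6_general P M hM vtil hvtil I J c ε hdist hHC1 hHC2
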